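/- arXiv:1809.06947 — 7 statements merged into one kernel-verified Lean document; each statement's English description precedes it below -/
import Mathlib

section
/- Let p be prime and k ≥ 1. For all n ≥ 0 and all i with 0 ≤ i ≤ p − 1, we have ℓ_{p,k}((pn + i)!) ≡ ℓ_{p,k}(n!) · (pn + i)_p! (mod p^k), where (pn+i)_p! is the Gauss factorial, i.e., the product of all m ≤ pn+i coprime to p. -/
/-! Among `1, …, p n + i` (with `i < p`) the multiples of `p` are exactly `p, 2p, …, np`, whose
product is `p ^ n * n!`; the remaining factors multiply to the Gauss factorial `(p n + i)_p!`.
Hence `(p n + i)! = p ^ n * n! * (p n + i)_p!`, and since the Gauss factorial is prime to `p`,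
the `p`-free part of `(p n + i)!` is the `p`-free part of `n!` times `(p n + i)_p!`. -/

def lastDigits (b k m : ℕ) : ℕ := (m / b ^ padicValNat b m) % b ^ k

def gaussFac (c n : ℕ) : ℕ := ∏ m ∈ (Finset.Icc 1 n).filter (fun m => Nat.Coprime c m), m

open Finset Nat

lemma lastDigits_eq_ordCompl_mod {p : ℕ} (hp : p.Prime) (k m : ℕ) :
    lastDigits p k m = ordCompl[p] m % p ^ k := by
  rw [lastDigits, factorization_def m hp]

lemma not_dvd_gaussFac {p : ℕ} (hp : p.Prime) (n : ℕ) : ¬p ∣ gaussFac p n :=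
  hp.coprime_iff_not_dvd.mp <| Coprime.prod_right fun _ hm => (mem_filter.mp hm).2

lemma Icc_filter_dvd_eq_image_mul {p : ℕ} (hp : 0 < p) (n : ℕ) {i : ℕ} (hi : i < p) :
    {m ∈ Icc 1 (p * n + i) | p ∣ m} = (Icc 1 n).image (p * ·) := by
  ext m
  simp only [mem_filter, mem_Icc, mem_image]
  constructor
  · rintro ⟨⟨hm1, hmn⟩, j, rfl⟩
    refine ⟨j, ⟨Nat.pos_of_ne_zero ?_, ?_⟩, rfl⟩
    · rintro rfl
      simp at hm1
    · by_contra! hj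
      nlinarith
  · rintro ⟨j, ⟨hj1, hjn⟩, rfl⟩
    exact ⟨⟨Nat.one_le_iff_ne_zero.mpr (by positivity), by nlinarith⟩, j, rfl⟩

lemma factorial_mul_add_eq {p : ℕ} (hp : p.Prime) (n : ℕ) {i : ℕ} (hi : i < p) :
    (p * n + i)! = p ^ n * n ! * gaussFac p (p * n + i) := by
  have prod_Icc_id (N : ℕ) : ∏ m ∈ Icc 1 N, m = N ! := by
    rw [← Ico_add_one_right_eq_Icc, prod_Ico_id_eq_factorial]
  have prod_multiples : ∏ m ∈ Icc 1 (p * n + i) with p ∣ m, m = p ^ n * n ! := by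
    rw [Icc_filter_dvd_eq_image_mul hp.pos n hi,
      prod_image fun _ _ _ _ h => Nat.eq_of_mul_eq_mul_left hp.pos h,
      prod_mul_distrib, prod_const, card_Icc, prod_Icc_id, Nat.add_sub_cancel]
  have prod_non_multiples :
      ∏ m ∈ Icc 1 (p * n + i) with ¬p ∣ m, m = gaussFac p (p * n + i) := by
    simp only [gaussFac, hp.coprime_iff_not_dvd]
  rw [← prod_Icc_id, ← prod_filter_mul_prod_filter_not _ (p ∣ ·), prod_multiples,
    prod_non_multiples]

theorem stmt_2_general (p k : ℕ) (hp : p.Prime) (n i : ℕ) (hi : i ≤ p - 1) :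
    lastDigits p k (Nat.factorial (p * n + i)) ≡
      lastDigits p k (Nat.factorial n) * gaussFac p (p * n + i) [MOD p ^ k] := by
  have hip : i < p := by have := hp.pos; omega
  have ordCompl_gaussFac : ordCompl[p] (gaussFac p (p * n + i)) = gaussFac p (p * n + i) :=
    (ordCompl_eq_self_iff_zero_or_not_dvd _ hp).mpr (Or.inr (not_dvd_gaussFac hp _))
  rw [lastDigits_eq_ordCompl_mod hp, lastDigits_eq_ordCompl_mod hp, factorial_mul_add_eq hp n hip,
    mul_assoc, ordCompl_self_pow_mul _ _ hp, ordCompl_mul, ordCompl_gaussFac]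
  exact (Nat.mod_modEq _ _).trans ((Nat.mod_modEq _ _).symm.mul_right _)

theorem stmt_2 (p k : ℕ) (hp : p.Prime) (hk : 1 ≤ k) (n i : ℕ) (hi : i ≤ p - 1) :
    lastDigits p k (Nat.factorial (p * n + i)) ≡
      lastDigits p k (Nat.factorial n) * gaussFac p (p * n + i) [MOD p ^ k] :=
  stmt_2_general p k hp n i hi
end

section
/- Let b be a positive integer with at least two distinct prime factors and prime factorization b = p_1^{l_1}⋯p_r^{l_r}, ordered so that l_1(p_1−1) ≥ l_i(p_i−1) for all i. If l_1(p_1−1) > l_2(p_2−1), then for every k ≥ 1 all sufficiently large n satisfy ν_{p_i^{l_i}}(n!) ≥ ν_{p_1^{l_1}}(n!) + k for all i = 2,…,r. -/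
/-!
By Legendre's formula `(p - 1) ν_p(n!) = n - s_p(n)`, and the digit sum `s_p(n)` is `O(log n)`, so
`ν_{p^l}(n!) = ⌊ν_p(n!) / l⌋` equals `n / (l (p - 1)) + O(log n)`. Hence if
`m (q - 1) < l (p - 1)`, the difference `ν_{q^m}(n!) - ν_{p^l}(n!)` grows linearly in `n` and
eventually exceeds every `k`.
-/

open Filter Nat

theorem padicValNat_prime_pow_eq_div {p l n : ℕ} [hp : Fact p.Prime] (hl : 0 < l) (hn : n ≠ 0) :
    padicValNat (p ^ l) n = padicValNat p n / l := by
  rw [padicValNat_def' (Nat.one_lt_pow hl.ne' hp.out.one_lt).ne' hn]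
  apply multiplicity_eq_of_dvd_of_not_dvd <;> rw [← pow_mul, padicValNat_dvd_iff_le hn]
  · exact Nat.mul_div_le _ _
  · have := Nat.lt_mul_div_succ (padicValNat p n) hl
    omega

theorem Nat.digits_sum_le_sub_one_mul_log {p : ℕ} (hp : 1 < p) (n : ℕ) :
    (p.digits n).sum ≤ (p - 1) * (Nat.log p n + 1) := by
  rcases eq_or_ne n 0 with rfl | hn
  · simp
  have hdigit : ∀ d ∈ p.digits n, d ≤ p - 1 := fun d hd =>
    Nat.le_sub_one_of_lt (Nat.digits_lt_base hp hd)
  simpa [Nat.length_digits p n hp hn, mul_comm] using List.sum_le_card_nsmul _ _ hdigit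

section Legendre

variable {p l : ℕ} [hp : Fact p.Prime]

theorem mul_padicValNat_prime_pow_factorial_le (hl : 0 < l) (n : ℕ) :
    l * (p - 1) * padicValNat (p ^ l) n ! ≤ n := by
  rw [padicValNat_prime_pow_eq_div hl (factorial_ne_zero n)]
  calc l * (p - 1) * (padicValNat p n ! / l)
      = (p - 1) * (l * (padicValNat p n ! / l)) := by ring
    _ ≤ (p - 1) * padicValNat p n ! := Nat.mul_le_mul_left _ (Nat.mul_div_le _ _)
    _ ≤ n := by rw [sub_one_mul_padicValNat_factorial]; exact Nat.sub_le _ _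

theorem le_mul_padicValNat_prime_pow_factorial (hl : 0 < l) (n : ℕ) :
    n ≤ l * (p - 1) * (padicValNat (p ^ l) n ! + Nat.log p n + 2) := by
  rw [padicValNat_prime_pow_eq_div hl (factorial_ne_zero n)]
  set v := padicValNat p n !
  have hlegendre : (p - 1) * v = n - (p.digits n).sum := sub_one_mul_padicValNat_factorial n
  have hdigits := Nat.digits_sum_le_sub_one_mul_log hp.out.one_lt n
  have hsum_le := Nat.digit_sum_le p n
  have hdiv : v < l * (v / l + 1) := Nat.lt_mul_div_succ v hl
  calc n = (p - 1) * v + (p.digits n).sum := by omega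
    _ ≤ (p - 1) * (l * (v / l + 1)) + (p - 1) * (Nat.log p n + 1) := by gcongr
    _ ≤ (p - 1) * (l * (v / l + 1)) + (p - 1) * (l * (Nat.log p n + 1)) := by
        gcongr; exact Nat.le_mul_of_pos_left _ hl
    _ = l * (p - 1) * (v / l + Nat.log p n + 2) := by ring

theorem padicValNat_prime_pow_factorial_le_div (hl : 0 < l) (n : ℕ) :
    (padicValNat (p ^ l) n ! : ℝ) ≤ n / (l * (p - 1) : ℕ) := by
  have hw : 0 < l * (p - 1) := Nat.mul_pos hl (Nat.sub_pos_of_lt hp.out.one_lt)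
  rw [le_div_iff₀' (by exact_mod_cast hw)]
  exact_mod_cast mul_padicValNat_prime_pow_factorial_le hl n

theorem div_sub_logb_le_padicValNat_prime_pow_factorial (hl : 0 < l) (n : ℕ) :
    (n : ℝ) / (l * (p - 1) : ℕ) - Real.logb p n - 2 ≤ padicValNat (p ^ l) n ! := by
  have hw : 0 < l * (p - 1) := Nat.mul_pos hl (Nat.sub_pos_of_lt hp.out.one_lt)
  have hlog := Real.natLog_le_logb n p
  have h : (n : ℝ) ≤ (l * (p - 1) : ℕ) * ((padicValNat (p ^ l) n ! : ℝ) + Nat.log p n + 2) := by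
    exact_mod_cast le_mul_padicValNat_prime_pow_factorial hl n
  rw [← div_le_iff₀' (by exact_mod_cast hw)] at h
  linarith

end Legendre

theorem Real.tendsto_mul_sub_logb_atTop {α : ℝ} (hα : 0 < α) (b : ℝ) :
    Tendsto (fun x => α * x - Real.logb b x) atTop atTop := by
  have hlog : Tendsto (fun x => Real.log x / x) atTop (nhds 0) := by
    simpa using Real.tendsto_pow_log_div_mul_add_atTop 1 0 1 one_ne_zero
  have hslope : Tendsto (fun x => α - Real.log x / x / Real.log b) atTop (nhds α) := by
    simpa using (hlog.div_const (Real.log b)).const_sub α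
  refine (tendsto_id.atTop_mul_pos hα hslope).congr' ?_
  filter_upwards [eventually_ne_atTop 0] with x hx
  simp only [id, Real.logb]
  field_simp

theorem tendsto_padicValNat_prime_pow_factorial_sub {p q l m : ℕ} [Fact p.Prime] [hq : Fact q.Prime]
    (hl : 0 < l) (hm : 0 < m) (hlt : m * (q - 1) < l * (p - 1)) :
    Tendsto (fun n => (padicValNat (q ^ m) n ! : ℝ) - padicValNat (p ^ l) n !) atTop atTop := by
  have hwq : (0 : ℝ) < (m * (q - 1) : ℕ) := by
    exact_mod_cast Nat.mul_pos hm (Nat.sub_pos_of_lt hq.out.one_lt)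
  have hslope : 0 < 1 / ((m * (q - 1) : ℕ) : ℝ) - 1 / (l * (p - 1) : ℕ) :=
    sub_pos.2 (one_div_lt_one_div_of_lt hwq (by exact_mod_cast hlt))
  refine tendsto_atTop_mono (fun n => ?_) <| tendsto_atTop_add_const_right _ (-2) <|
    (Real.tendsto_mul_sub_logb_atTop hslope q).comp tendsto_natCast_atTop_atTop
  have hlower := div_sub_logb_le_padicValNat_prime_pow_factorial (p := q) hm n
  have hupper := padicValNat_prime_pow_factorial_le_div (p := p) hl n
  simp only [Function.comp_apply, sub_mul, one_div_mul_eq_div]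
  linarith

theorem stmt_4_general (r : ℕ) (p l : Fin r → ℕ)
    (i₀ : Fin r)
    (hp : ∀ i, (p i).Prime) (hl : ∀ i, 1 ≤ l i)
    (hstrict : ∀ i : Fin r, i ≠ i₀ → l i * (p i - 1) < l i₀ * (p i₀ - 1)) :
    ∀ k : ℕ, 1 ≤ k → ∃ N : ℕ, ∀ n ≥ N, ∀ i : Fin r, i ≠ i₀ →
      padicValNat (p i₀ ^ l i₀) (Nat.factorial n) + k ≤
        padicValNat (p i ^ l i) (Nat.factorial n) := by
  intro k _
  have hgap (i : Fin r) (hi : i ≠ i₀) :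
      ∀ᶠ n in atTop, padicValNat (p i₀ ^ l i₀) n ! + k ≤ padicValNat (p i ^ l i) n ! := by
    have := Fact.mk (hp i)
    have := Fact.mk (hp i₀)
    filter_upwards [(tendsto_padicValNat_prime_pow_factorial_sub (hl i₀) (hl i)
      (hstrict i hi)).eventually_ge_atTop k] with n hn
    have : ((padicValNat (p i₀ ^ l i₀) n ! + k : ℕ) : ℝ) ≤ padicValNat (p i ^ l i) n ! := by
      push_cast
      linarith
    exact_mod_cast this
  exact eventually_atTop.1 <| eventually_all.2 fun i => eventually_imp_distrib_left.2 (hgap i)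

theorem stmt_4 (r : ℕ) (hr : 2 ≤ r) (p l : Fin r → ℕ) (b : ℕ)
    (i₀ : Fin r) (hi₀ : (i₀ : ℕ) = 0)
    (hp : ∀ i, (p i).Prime) (hl : ∀ i, 1 ≤ l i)
    (hinj : Function.Injective p)
    (hb : b = ∏ i, p i ^ l i)
    (horder : ∀ i j : Fin r, i ≤ j → l j * (p j - 1) ≤ l i * (p i - 1))
    (hstrict : ∀ i : Fin r, i ≠ i₀ → l i * (p i - 1) < l i₀ * (p i₀ - 1)) :
    ∀ k : ℕ, 1 ≤ k → ∃ N : ℕ, ∀ n ≥ N, ∀ i : Fin r, i ≠ i₀ →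
      padicValNat (p i₀ ^ l i₀) (Nat.factorial n) + k ≤
        padicValNat (p i ^ l i) (Nat.factorial n) :=
  stmt_4_general r p l i₀ hp hl hstrict
end

section
/- Let p be a prime, k ≥ 1, and j with 1 ≤ j ≤ p^s m − 1 where m ≥ 1, s ≥ 0. If t ≥ k + ⌊log_p m⌋ and p ∤ n, then ℓ_{p,k}(n·p^{s+t} − j) ≡ −ℓ_{p,k}(j) (mod p^k). -/
/-!
Write `v = ν_p(j)`. Since `p ^ (v + k)` divides `M = n p^(s+t)` (the bound on `t` makes `v + k ≤ s + t`),
subtracting `j` from `M` does not change the valuation, and after dividing by `p ^ v` the two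
mantissas of `M - j` and `j` add up to `M / p ^ v`, a multiple of `p ^ k`.
-/

theorem lastDigits_modEq (p k x : ℕ) :
    (lastDigits p k x : ℤ) ≡ ((x / p ^ padicValNat p x : ℕ) : ℤ) [ZMOD (p : ℤ) ^ k] := by
  rw [lastDigits]
  push_cast
  exact Int.mod_modEq _ _

section

variable {p : ℕ} [Fact p.Prime]

theorem padicValNat_sub_eq_of_pow_succ_dvd {M j : ℕ} (hj : j ≠ 0) (hjM : j < M)
    (hM : p ^ (padicValNat p j + 1) ∣ M) : padicValNat p (M - j) = padicValNat p j := by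
  set v := padicValNat p j
  have hMj : M - j ≠ 0 := by omega
  have hv_dvd : p ^ v ∣ M - j :=
    Nat.dvd_sub ((pow_dvd_pow p v.le_succ).trans hM) pow_padicValNat_dvd
  have hv_succ_not_dvd : ¬ p ^ (v + 1) ∣ M - j := fun h => by
    have hj_dvd : p ^ (v + 1) ∣ j := by
      simpa [Nat.sub_sub_self hjM.le] using Nat.dvd_sub hM h
    have := (padicValNat_dvd_iff_le hj).mp hj_dvd
    omega
  have h₁ := (padicValNat_dvd_iff_le hMj).mp hv_dvd
  have h₂ := mt (padicValNat_dvd_iff_le hMj).mpr hv_succ_not_dvd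
  omega

theorem lastDigits_sub_modEq_neg {k M j : ℕ} (hj : j ≠ 0) (hjM : j < M)
    (hM : p ^ (padicValNat p j + k) ∣ M) :
    (lastDigits p k (M - j) : ℤ) ≡ -(lastDigits p k j : ℤ) [ZMOD (p : ℤ) ^ k] := by
  obtain rfl | hk := Nat.eq_zero_or_pos k
  · simp [Int.modEq_one]
  set v := padicValNat p j
  have hval : padicValNat p (M - j) = v :=
    padicValNat_sub_eq_of_pow_succ_dvd hj hjM ((pow_dvd_pow p (by omega)).trans hM)
  obtain ⟨c, hc⟩ := hM
  have hj_dvd : p ^ v ∣ j := pow_padicValNat_dvd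
  have hsum : (M - j) / p ^ v + j / p ^ v = p ^ k * c := by
    rw [← Nat.add_div_of_dvd_left hj_dvd, Nat.sub_add_cancel hjM.le, hc, pow_add, mul_assoc,
      Nat.mul_div_cancel_left _ (pow_pos (Fact.out : p.Prime).pos v)]
  have hsum_int : (((M - j) / p ^ v : ℕ) : ℤ) = (p : ℤ) ^ k * c - ((j / p ^ v : ℕ) : ℤ) := by
    rw [eq_sub_iff_add_eq]
    exact_mod_cast hsum
  have hmantissa : (((M - j) / p ^ v : ℕ) : ℤ) ≡ -((j / p ^ v : ℕ) : ℤ) [ZMOD (p : ℤ) ^ k] := by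
    rw [hsum_int, sub_eq_add_neg]
    exact Int.modEq_iff_dvd.mpr ⟨-c, by ring⟩
  calc (lastDigits p k (M - j) : ℤ)
      ≡ (((M - j) / p ^ v : ℕ) : ℤ) [ZMOD (p : ℤ) ^ k] := hval ▸ lastDigits_modEq p k (M - j)
    _ ≡ -((j / p ^ v : ℕ) : ℤ) [ZMOD (p : ℤ) ^ k] := hmantissa
    _ ≡ -(lastDigits p k j : ℤ) [ZMOD (p : ℤ) ^ k] := (lastDigits_modEq p k j).symm.neg

end

theorem lt_pow_add_log_succ_of_lt_pow_mul {p s m j : ℕ} (hp : 1 < p) (hj : j < p ^ s * m) :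
    j < p ^ (s + Nat.log p m + 1) :=
  calc j < p ^ s * m := hj
    _ ≤ p ^ s * p ^ (Nat.log p m + 1) := Nat.mul_le_mul_left _ (Nat.lt_pow_succ_log_self hp m).le
    _ = p ^ (s + Nat.log p m + 1) := by ring

theorem stmt_7_general (p k n m s t j : ℕ) (hp : p.Prime) (hk : 1 ≤ k)
    (hj : 1 ≤ j) (hj' : j ≤ p ^ s * m - 1)
    (ht : k + Nat.log p m ≤ t) (hpn : ¬ p ∣ n) :
    ((lastDigits p k (n * p ^ (s + t) - j) : ℕ) : ℤ) ≡
      -(lastDigits p k j : ℤ) [ZMOD (p : ℤ) ^ k] := by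
  have : Fact p.Prime := ⟨hp⟩
  have hn : n ≠ 0 := by rintro rfl; exact hpn (dvd_zero p)
  have hj_lt : j < p ^ (s + Nat.log p m + 1) :=
    lt_pow_add_log_succ_of_lt_pow_mul hp.one_lt (by omega)
  have hval : padicValNat p j + k ≤ s + t := by
    have := (padicValNat_le_nat_log j).trans_lt (Nat.log_lt_of_lt_pow (by omega) hj_lt)
    omega
  have hjM : j < n * p ^ (s + t) :=
    calc j < p ^ (s + Nat.log p m + 1) := hj_lt
      _ ≤ p ^ (s + t) := Nat.pow_le_pow_right hp.pos (by omega)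
      _ ≤ n * p ^ (s + t) := Nat.le_mul_of_pos_left _ (Nat.pos_of_ne_zero hn)
  exact lastDigits_sub_modEq_neg (by omega) hjM (Dvd.dvd.mul_left (pow_dvd_pow p hval) n)

theorem stmt_7 (p k n m s t j : ℕ) (hp : p.Prime) (hk : 1 ≤ k) (hm : 1 ≤ m)
    (hj : 1 ≤ j) (hj' : j ≤ p ^ s * m - 1)
    (ht : k + Nat.log p m ≤ t) (hpn : ¬ p ∣ n) :
    ((lastDigits p k (n * p ^ (s + t) - j) : ℕ) : ℤ) ≡
      -(lastDigits p k j : ℤ) [ZMOD (p : ℤ) ^ k] :=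
  stmt_7_general p k n m s t j hp hk hj hj' ht hpn
end

section
/- Let p be a odd prime, k ≥ 1, and v a positive integer divisible by p^{k−1} and by 2. Then for all integers t ≥ 1, ℓ_{p,k}((p^t v)!) ≡ ℓ_{p,k}(v!) (mod p^k). -/
open Finset Nat

theorem prod_univ_id_sq_eq_one {G : Type*} [CommGroup G] [Fintype G] : (∏ g : G, g) ^ 2 = 1 := by
  have hinv : (∏ g : G, g)⁻¹ = ∏ g : G, g := by
    rw [← prod_inv_distrib]
    exact Fintype.prod_equiv (Equiv.inv G) _ _ fun _ => rfl
  rw [sq]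
  nth_rewrite 1 [← hinv]
  exact inv_mul_cancel _

theorem ZMod.prod_coprime_eq_prod_units (n : ℕ) [NeZero n] :
    ∏ i ∈ range n with i.Coprime n, (i : ZMod n) = ∏ u : (ZMod n)ˣ, (u : ZMod n) := by
  refine prod_bij (fun i hi => ZMod.unitOfCoprime i (mem_filter.mp hi).2) (fun _ _ => mem_univ _)
    ?_ ?_ fun _ _ => (ZMod.coe_unitOfCoprime _ _).symm
  · intro i hi j hj hij
    have := congrArg (fun u : (ZMod n)ˣ => (u : ZMod n).val) hij
    simp only [ZMod.coe_unitOfCoprime, ZMod.val_natCast] at this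
    rwa [Nat.mod_eq_of_lt (mem_range.mp (mem_filter.mp hi).1),
      Nat.mod_eq_of_lt (mem_range.mp (mem_filter.mp hj).1)] at this
  · intro u _
    refine ⟨(u : ZMod n).val, mem_filter.mpr ⟨mem_range.mpr (ZMod.val_lt _),
      ZMod.val_coe_unit_coprime u⟩, Units.ext ?_⟩
    simp

namespace Nat

def gaussFactorial (p n : ℕ) : ℕ := ∏ i ∈ Icc 1 n with ¬p ∣ i, i

theorem gaussFactorial_zero (p : ℕ) : gaussFactorial p 0 = 1 := rfl

theorem gaussFactorial_succ (p n : ℕ) :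
    gaussFactorial p (n + 1) = gaussFactorial p n * if p ∣ n + 1 then 1 else n + 1 := by
  simp only [gaussFactorial, prod_filter, prod_Icc_succ_top (Nat.le_add_left 1 n), ite_not]

theorem factorial_eq_pow_mul_factorial_mul_gaussFactorial (p n : ℕ) :
    n ! = p ^ (n / p) * (n / p)! * gaussFactorial p n := by
  induction n with
  | zero => simp [gaussFactorial_zero]
  | succ n ih =>
    rw [factorial_succ, ih, gaussFactorial_succ]
    by_cases h : p ∣ n + 1
    · have hn : n + 1 = p * (n / p + 1) := by rw [← succ_div_of_dvd h, Nat.mul_div_cancel' h]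
      rw [if_pos h, succ_div_of_dvd h, hn, factorial_succ]
      ring
    · rw [if_neg h, succ_div_of_not_dvd h]
      ring

theorem not_dvd_gaussFactorial {p : ℕ} (hp : p.Prime) (n : ℕ) : ¬p ∣ gaussFactorial p n := by
  intro h
  obtain ⟨i, hi, hpi⟩ := (Prime.dvd_finsetProd_iff hp.prime _).mp h
  exact (mem_filter.mp hi).2 hpi

theorem ordCompl_factorial {p : ℕ} (hp : p.Prime) (n : ℕ) :
    ordCompl[p] n ! = ordCompl[p] (n / p)! * gaussFactorial p n := by
  rw [factorial_eq_pow_mul_factorial_mul_gaussFactorial p n, mul_assoc,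
    ordCompl_self_pow_mul _ _ hp, ordCompl_mul,
    (ordCompl_eq_self_iff_zero_or_not_dvd _ hp).mpr (.inr (not_dvd_gaussFactorial hp n))]

theorem gaussFactorial_add_of_dvd {p N m : ℕ} (hpN : p ∣ N) (hNm : N ∣ m) (n : ℕ) :
    (gaussFactorial p (m + n) : ZMod N) = gaussFactorial p m * gaussFactorial p n := by
  induction n with
  | zero => simp [gaussFactorial_zero]
  | succ n ih =>
    have hdvd : p ∣ m + n + 1 ↔ p ∣ n + 1 := by
      rw [add_assoc]; exact Nat.dvd_add_right (hpN.trans hNm)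
    have hcast : ((m + n + 1 : ℕ) : ZMod N) = ((n + 1 : ℕ) : ZMod N) := by
      rw [add_assoc, cast_add _ (n + 1), (ZMod.natCast_eq_zero_iff m N).mpr hNm, zero_add]
    rw [← add_assoc, gaussFactorial_succ, gaussFactorial_succ]
    by_cases h : p ∣ n + 1
    · rw [if_pos (hdvd.mpr h), if_pos h, cast_mul, cast_mul, ih, mul_assoc]
    · rw [if_neg (mt hdvd.mp h), if_neg h, cast_mul, cast_mul, ih, hcast, mul_assoc]

theorem gaussFactorial_mul_of_dvd {p N : ℕ} (hpN : p ∣ N) (d : ℕ) :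
    (gaussFactorial p (N * d) : ZMod N) = (gaussFactorial p N : ZMod N) ^ d := by
  induction d with
  | zero => simp [gaussFactorial_zero]
  | succ d ih =>
    rw [mul_succ, gaussFactorial_add_of_dvd hpN (dvd_mul_right N d), ih, pow_succ]

theorem gaussFactorial_prime_pow {p k : ℕ} (hp : p.Prime) (hk : k ≠ 0) :
    gaussFactorial p (p ^ k) = ∏ i ∈ range (p ^ k) with i.Coprime (p ^ k), i := by
  have hpk : p ∣ p ^ k := dvd_pow_self p hk
  rw [gaussFactorial]
  congr 1
  ext i
  simp only [mem_filter, mem_Icc, mem_range, coprime_pow_right_iff (pos_of_ne_zero hk),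
    coprime_comm, hp.coprime_iff_not_dvd]
  constructor
  · rintro ⟨⟨-, hi⟩, hpi⟩
    exact ⟨lt_of_le_of_ne hi (by rintro rfl; exact hpi hpk), hpi⟩
  · rintro ⟨hi, hpi⟩
    have hi0 : i ≠ 0 := by rintro rfl; exact hpi (dvd_zero p)
    exact ⟨⟨pos_of_ne_zero hi0, hi.le⟩, hpi⟩

theorem gaussFactorial_prime_pow_sq {p k : ℕ} (hp : p.Prime) (hk : k ≠ 0) :
    (gaussFactorial p (p ^ k) : ZMod (p ^ k)) ^ 2 = 1 := by
  have : NeZero (p ^ k) := ⟨pow_ne_zero k hp.ne_zero⟩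
  rw [gaussFactorial_prime_pow hp hk, cast_prod, ZMod.prod_coprime_eq_prod_units,
    ← Units.coe_prod, ← Units.val_pow_eq_pow_val, prod_univ_id_sq_eq_one, Units.val_one]

theorem ordCompl_factorial_prime_mul_modEq {p k M : ℕ} (hp : p.Prime) (hodd : Odd p)
    (hk : 1 ≤ k) (hM1 : p ^ (k - 1) ∣ M) (hM2 : 2 ∣ M) :
    ordCompl[p] (p * M)! ≡ ordCompl[p] M ! [MOD p ^ k] := by
  obtain ⟨d, rfl⟩ := hM1
  have hd : 2 ∣ d :=
    (Nat.Coprime.pow_right _ (coprime_two_left.mpr hodd)).dvd_of_dvd_mul_left hM2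
  obtain ⟨e, rfl⟩ := hd
  have hpk : p * (p ^ (k - 1) * (2 * e)) = p ^ k * (2 * e) := by
    rw [← mul_assoc, ← _root_.pow_succ', Nat.sub_add_cancel hk]
  rw [← ZMod.natCast_eq_natCast_iff, ordCompl_factorial hp, Nat.mul_div_cancel_left _ hp.pos,
    cast_mul, hpk, gaussFactorial_mul_of_dvd (dvd_pow_self p (by omega)), pow_mul,
    gaussFactorial_prime_pow_sq hp (by omega), one_pow, mul_one]

end Nat

theorem lastDigits_modEq_iff {p : ℕ} (hp : p.Prime) (k a b : ℕ) :
    lastDigits p k a ≡ lastDigits p k b [MOD p ^ k] ↔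
      ordCompl[p] a ≡ ordCompl[p] b [MOD p ^ k] := by
  simp only [Nat.ModEq, lastDigits, ← Nat.factorization_def _ hp, Nat.mod_mod]

theorem stmt_9_general (p k v : ℕ) (hp : p.Prime) (hodd : Odd p) (hk : 1 ≤ k)
    (hv1 : p ^ (k - 1) ∣ v) (hv2 : 2 ∣ v) :
    ∀ t : ℕ, 1 ≤ t →
      lastDigits p k (Nat.factorial (p ^ t * v)) ≡
        lastDigits p k (Nat.factorial v) [MOD p ^ k] := by
  rintro t -
  rw [lastDigits_modEq_iff hp]
  induction t with
  | zero => rw [pow_zero, one_mul]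
  | succ t ih =>
    rw [pow_succ', mul_assoc]
    exact (Nat.ordCompl_factorial_prime_mul_modEq hp hodd hk (hv1.mul_left _)
      (hv2.mul_left _)).trans ih

theorem stmt_9 (p k v : ℕ) (hp : p.Prime) (hodd : Odd p) (hk : 1 ≤ k)
    (hv : 0 < v) (hv1 : p ^ (k - 1) ∣ v) (hv2 : 2 ∣ v) :
    ∀ t : ℕ, 1 ≤ t →
      lastDigits p k (Nat.factorial (p ^ t * v)) ≡
        lastDigits p k (Nat.factorial v) [MOD p ^ k] :=
  stmt_9_general p k v hp hodd hk hv1 hv2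
end

section
/- Let p be a prime, k ≥ 1, u ≥ 1, and v divisible by lcm(p^{k−1}, u, 2) (and by 4 if p = 2, k = 2). Then for every unit x modulo p^k, every residue y modulo u, and every residue z modulo v, there exists n ≥ 0 with ℓ_{p,k}(n!) = x, ν_p(n!) ≡ y (mod u), and n ≡ z (mod v). -/
/-!
Record `n` by its signature `(n mod v, ν_p(n!) mod u, ℓ_{p,k}(n!))`, an element of a finite
abelian group. If `n < p ^ j` and the digits of `D` are written at position `i = j + k - 1`, far
above those of `n`, Legendre's recursion `n! ~ (∏_{m ≤ n, p ∤ m} m) · p ^ (n / p) · (n / p)!` shows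
that the signature of `n + D p ^ i` is that of `n` shifted by an element depending on `D` and on
`i` only through `p ^ i mod v`, `1 + p + ⋯ + p ^ (i - 1) mod u` and a unit of `ZMod (p ^ k)`.
By pigeonhole these three data recur for infinitely many `i`, so the set of signatures is stable
under the shifts of all `D`, hence under the subgroup they generate. That subgroup contains all
`(0, a, b)`: comparing the shifts of `m p ^ k` and `m p ^ k - p` for `m` and for `1` isolates the
unit `m` (the product of the `p ^ k` numbers ending at `m p ^ (2k - 1)` has unit part `m` times a
constant), and the shift of `p` minus `p` times that of `1` raises the valuation by one.
-/

open Finset Nat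

namespace FactorialResidue

theorem add_mem_of_mem_closure_of_forall_add_mem {G : Type*} [AddGroup G] [Finite G]
    {A S : Set G} (hA : ∀ a ∈ A, ∀ s ∈ S, a + s ∈ A) {a g : G} (ha : a ∈ A)
    (hg : g ∈ AddSubgroup.closure S) : a + g ∈ A := by
  rw [← AddSubgroup.mem_toAddSubmonoid, AddSubgroup.closure_toAddSubmonoid_of_finite] at hg
  induction hg using AddSubmonoid.closure_induction generalizing a with
  | mem s hs => exact hA a ha s hs
  | zero => rwa [add_zero]
  | add g h _ _ hg hh => rw [← add_assoc]; exact hh (hg ha)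

def unitPart (p k : ℕ) : ℕ →* ZMod (p ^ k) where
  toFun n := (ordCompl[p] n : ℕ)
  map_one' := by simp
  map_mul' a b := by simp [Nat.ordCompl_mul]

@[simp]
theorem unitPart_apply (p k n : ℕ) : unitPart p k n = (ordCompl[p] n : ℕ) := rfl

theorem lastDigits_eq_unitPart {p : ℕ} (hp : p.Prime) (k m : ℕ) :
    (lastDigits p k m : ZMod (p ^ k)) = unitPart p k m := by
  rw [lastDigits, ZMod.natCast_mod, unitPart_apply, Nat.factorization_def m hp]

variable {p : ℕ} (k : ℕ)

theorem unitPart_prime_pow_mul (hp : p.Prime) (j n : ℕ) :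
    unitPart p k (p ^ j * n) = unitPart p k n := by
  simp [ordCompl_self_pow_mul n j hp]

theorem unitPart_prime_mul (hp : p.Prime) (n : ℕ) : unitPart p k (p * n) = unitPart p k n := by
  simpa using unitPart_prime_pow_mul k hp 1 n

theorem unitPart_of_not_dvd (hp : p.Prime) {n : ℕ} (h : ¬p ∣ n) : unitPart p k n = n := by
  rw [unitPart_apply, (ordCompl_eq_self_iff_zero_or_not_dvd n hp).2 (Or.inr h)]

theorem isUnit_unitPart (hp : p.Prime) {n : ℕ} (hn : n ≠ 0) : IsUnit (unitPart p k n) :=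
  (ZMod.isUnit_iff_coprime _ _).2 ((coprime_ordCompl hp hn).symm.pow_right k)

def coprimeFactorial (p k n : ℕ) : ZMod (p ^ k) :=
  ∏ j ∈ range n, if p ∣ j + 1 then 1 else ((j + 1 : ℕ) : ZMod (p ^ k))

theorem coprimeFactorial_succ (n : ℕ) :
    coprimeFactorial p k (n + 1) =
      coprimeFactorial p k n * if p ∣ n + 1 then 1 else ((n + 1 : ℕ) : ZMod (p ^ k)) :=
  prod_range_succ _ n

theorem isUnit_coprimeFactorial (hp : p.Prime) (n : ℕ) : IsUnit (coprimeFactorial p k n) := by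
  refine prod_induction _ IsUnit (fun _ _ => IsUnit.mul) isUnit_one fun j _ => ?_
  split_ifs with h
  · exact isUnit_one
  · rw [← unitPart_of_not_dvd k hp h]
    exact isUnit_unitPart k hp j.succ_ne_zero

theorem coprimeFactorial_add (hk : k ≠ 0) {N : ℕ} (hN : p ^ k ∣ N) (x : ℕ) :
    coprimeFactorial p k (x + N) = coprimeFactorial p k x * coprimeFactorial p k N := by
  have hpN : p ∣ N := (dvd_pow_self p hk).trans hN
  have hN0 : (N : ZMod (p ^ k)) = 0 := (ZMod.natCast_eq_zero_iff N _).2 hN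
  rw [coprimeFactorial, add_comm, prod_range_add, ← coprimeFactorial, mul_comm]
  congr 1
  refine prod_congr rfl fun j _ => ?_
  simp only [add_assoc, Nat.dvd_add_right hpN, Nat.cast_add N, hN0, zero_add]

theorem coprimeFactorial_mul_pow (hk : k ≠ 0) (b : ℕ) :
    coprimeFactorial p k (b * p ^ k) = coprimeFactorial p k (p ^ k) ^ b := by
  induction b with
  | zero => simp [coprimeFactorial]
  | succ b ih => rw [add_one_mul, coprimeFactorial_add k hk dvd_rfl, ih, pow_succ]

theorem unitPart_factorial (hp : p.Prime) (n : ℕ) :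
    unitPart p k n ! = coprimeFactorial p k n * unitPart p k (n / p)! := by
  induction n with
  | zero => simp [coprimeFactorial]
  | succ n ih =>
    rw [factorial_succ, map_mul, ih, coprimeFactorial_succ]
    by_cases h : p ∣ n + 1
    · obtain ⟨m, hm⟩ := h
      have hdiv : (n + 1) / p = n / p + 1 := Nat.succ_div_of_dvd ⟨m, hm⟩
      have hm' : m = n / p + 1 := by rw [← hdiv, hm, Nat.mul_div_cancel_left _ hp.pos]
      rw [if_pos ⟨m, hm⟩, hdiv, factorial_succ, map_mul, hm, unitPart_prime_mul k hp, hm']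
      ring
    · rw [if_neg h, unitPart_of_not_dvd k hp h, Nat.succ_div_of_not_dvd h]
      ring

theorem padicValNat_factorial_eq_add_div (hp : p.Prime) (n : ℕ) :
    padicValNat p n ! = padicValNat p (n / p)! + n / p := by
  have := Fact.mk hp
  rw [← padicValNat_mul_div_factorial n, padicValNat_factorial_mul]

theorem add_mul_pow_succ_div (hp : 0 < p) (n D i : ℕ) :
    (n + D * p ^ (i + 1)) / p = n / p + D * p ^ i := by
  rw [pow_succ, ← mul_assoc, Nat.add_mul_div_right _ _ hp]

theorem div_lt_pow_of_lt_pow_succ {j n : ℕ} (hn : n < p ^ (j + 1)) : n / p < p ^ j :=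
  Nat.div_lt_of_lt_mul (pow_succ' p j ▸ hn)

theorem unitPart_factorial_add_mul_pow (hp : p.Prime) (hk : k ≠ 0) {j n : ℕ} (hn : n < p ^ j)
    (D : ℕ) :
    unitPart p k (n + D * p ^ (j + (k - 1)))! =
      unitPart p k n ! * coprimeFactorial p k (p ^ k) ^ (D * ∑ r ∈ range j, p ^ r) *
        unitPart p k (D * p ^ (k - 1))! := by
  induction j generalizing n with
  | zero => simp [Nat.lt_one_iff.1 (pow_zero p ▸ hn)]
  | succ j ih =>
    have hi : j + 1 + (k - 1) = j + (k - 1) + 1 := by omega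
    have hW : coprimeFactorial p k (n + D * p ^ (j + (k - 1) + 1)) =
        coprimeFactorial p k n * coprimeFactorial p k (p ^ k) ^ (D * p ^ j) := by
      rw [← hi, show j + 1 + (k - 1) = j + k by omega, pow_add, ← mul_assoc,
        coprimeFactorial_add k hk (dvd_mul_left _ _), coprimeFactorial_mul_pow k hk]
    rw [hi, unitPart_factorial k hp, add_mul_pow_succ_div hp.pos, hW,
      ih (div_lt_pow_of_lt_pow_succ hn), unitPart_factorial k hp n, sum_range_succ, mul_add,
      pow_add]
    ring

theorem padicValNat_factorial_add_mul_pow (hp : p.Prime) {i n : ℕ} (hn : n < p ^ i) (D : ℕ) :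
    padicValNat p (n + D * p ^ i)! =
      padicValNat p n ! + D * ∑ r ∈ range i, p ^ r + padicValNat p D ! := by
  induction i generalizing n with
  | zero => simp [Nat.lt_one_iff.1 (pow_zero p ▸ hn)]
  | succ i ih =>
    rw [padicValNat_factorial_eq_add_div hp, add_mul_pow_succ_div hp.pos,
      ih (div_lt_pow_of_lt_pow_succ hn), padicValNat_factorial_eq_add_div hp n, sum_range_succ]
    ring

theorem factorization_lt_of_lt_pow (hp : 1 < p) {i : ℕ} (hi : i ≠ 0) (hlt : i < p ^ k) :
    i.factorization p < k :=
  (Nat.pow_lt_pow_iff_right hp).1 ((ordProj_le p hi).trans_lt hlt)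

theorem unitPart_sub_of_pow_dvd (hp : p.Prime) (hk : k ≠ 0) {N i : ℕ} (hi : i ≠ 0) (hiN : i < N)
    (hdvd : p ^ (i.factorization p + k) ∣ N) : unitPart p k (N - i) = -unitPart p k i := by
  set a := i.factorization p
  obtain ⟨c, rfl⟩ := hdvd
  have hi' := ordProj_mul_ordCompl_eq_self i p
  have hlt : ordCompl[p] i < p ^ k * c := by
    rw [← hi', pow_add, mul_assoc] at hiN
    exact Nat.lt_of_mul_lt_mul_left hiN
  have hsub : p ^ (a + k) * c - i = p ^ a * (p ^ k * c - ordCompl[p] i) := by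
    rw [Nat.mul_sub, ← mul_assoc, ← pow_add, hi']
  have hnd : ¬p ∣ p ^ k * c - ordCompl[p] i := fun h => by
    have := Nat.dvd_sub (dvd_mul_of_dvd_left (dvd_pow_self p hk) c) h
    exact not_dvd_ordCompl hp hi (by rwa [Nat.sub_sub_self hlt.le] at this)
  rw [hsub, unitPart_prime_pow_mul k hp, unitPart_of_not_dvd k hp hnd, Nat.cast_sub hlt.le,
    Nat.cast_mul, ZMod.natCast_self, zero_mul, zero_sub, unitPart_apply]

theorem unitPart_factorial_of_pow_dvd (hp : p.Prime) (hk : k ≠ 0) {N : ℕ} (hN0 : N ≠ 0)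
    (hN : p ^ (2 * k - 1) ∣ N) :
    unitPart p k N ! = unitPart p k N * ((-1) ^ (p ^ k - 1) * unitPart p k (p ^ k - 1)!) *
      unitPart p k (N - p ^ k)! := by
  have hpkN : p ^ k ≤ N :=
    Nat.le_of_dvd (Nat.pos_of_ne_zero hN0) ((pow_dvd_pow p (by omega)).trans hN)
  have hterm : ∀ j ∈ range (p ^ k - 1), unitPart p k (N - 1 - j) = -unitPart p k (j + 1) := by
    intro j hj
    have hj : j + 1 < p ^ k := by rw [mem_range] at hj; omega
    rw [Nat.sub_sub, add_comm 1 j]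
    refine unitPart_sub_of_pow_dvd k hp hk (by omega) (by omega) ((pow_dvd_pow p ?_).trans hN)
    have := factorization_lt_of_lt_pow k hp.one_lt (by omega) hj
    omega
  have hdesc : N.descFactorial (p ^ k) = N * (N - 1).descFactorial (p ^ k - 1) := by
    have := succ_descFactorial_succ (N - 1) (p ^ k - 1)
    rwa [Nat.sub_add_cancel (pow_pos hp.pos k), Nat.sub_add_cancel (by omega)] at this
  rw [← factorial_mul_descFactorial hpkN, map_mul, mul_comm, hdesc, map_mul,
    descFactorial_eq_prod_range, map_prod, prod_congr rfl hterm, prod_neg, card_range,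
    factorial_eq_prod_range_add_one (p ^ k - 1), map_prod]

theorem unitPart_factorial_mul_pow (hp : p.Prime) (hk : k ≠ 0) {m : ℕ} (hm : ¬p ∣ m) :
    unitPart p k (m * p ^ k * p ^ (k - 1))! =
      m * ((-1) ^ (p ^ k - 1) * unitPart p k (p ^ k - 1)!) *
        unitPart p k ((m * p ^ k - p) * p ^ (k - 1))! := by
  have hN : m * p ^ k * p ^ (k - 1) = p ^ (2 * k - 1) * m := by
    rw [mul_assoc, ← pow_add, mul_comm]
    congr 2
    omega
  have hsub : (m * p ^ k - p) * p ^ (k - 1) = m * p ^ k * p ^ (k - 1) - p ^ k := by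
    rw [Nat.sub_mul, ← pow_succ', Nat.succ_eq_add_one, Nat.sub_one_add_one hk]
  have hN0 : m * p ^ k * p ^ (k - 1) ≠ 0 := by
    rw [hN]
    exact mul_ne_zero (pow_ne_zero _ hp.ne_zero) fun h => hm (h ▸ dvd_zero p)
  rw [hsub, unitPart_factorial_of_pow_dvd k hp hk hN0 (hN ▸ dvd_mul_right _ _), hN,
    unitPart_prime_pow_mul k hp, unitPart_of_not_dvd k hp hm]

theorem padicValNat_factorial_of_dvd (hp : p.Prime) {N : ℕ} (hN : p ∣ N) (hN0 : N ≠ 0) :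
    padicValNat p N ! = padicValNat p (N - p)! + padicValNat p N := by
  have := Fact.mk hp
  obtain ⟨c, rfl⟩ := hN
  obtain ⟨c, rfl⟩ := Nat.exists_eq_add_one.2 (Nat.pos_of_ne_zero (right_ne_zero_of_mul hN0))
  rw [show p * (c + 1) - p = p * c by rw [Nat.mul_succ, Nat.add_sub_cancel],
    padicValNat_factorial_mul, padicValNat_factorial_mul, factorial_succ,
    padicValNat.mul c.succ_ne_zero c.factorial_ne_zero, padicValNat.mul hp.ne_zero c.succ_ne_zero,
    padicValNat_self]
  ring

theorem padicValNat_factorial_mul_pow (hp : p.Prime) (hk : k ≠ 0) {m : ℕ} (hm : ¬p ∣ m) :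
    padicValNat p (m * p ^ k)! = padicValNat p (m * p ^ k - p)! + k := by
  have := Fact.mk hp
  have hm0 : m ≠ 0 := fun h => hm (h ▸ dvd_zero p)
  rw [padicValNat_factorial_of_dvd hp (dvd_mul_of_dvd_right (dvd_pow_self p hk) m)
      (mul_ne_zero hm0 (pow_ne_zero k hp.ne_zero)),
    padicValNat.mul hm0 (pow_ne_zero k hp.ne_zero), padicValNat.prime_pow,
    padicValNat.eq_zero_of_not_dvd hm, zero_add]

section Signature

variable (hp : p.Prime) (u v : ℕ)

def factorialUnit (n : ℕ) : (ZMod (p ^ k))ˣ :=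
  ZMod.unitOfCoprime (ordCompl[p] n !) ((coprime_ordCompl hp n.factorial_ne_zero).symm.pow_right k)

@[simp]
theorem coe_factorialUnit (n : ℕ) : (factorialUnit k hp n : ZMod (p ^ k)) = unitPart p k n ! :=
  rfl

def signature (n : ℕ) : ZMod v × ZMod u × Additive (ZMod (p ^ k))ˣ :=
  (n, padicValNat p n !, Additive.ofMul (factorialUnit k hp n))

/-- The change of `signature` when the digits of `D` are written at a position `i` with
`p ^ i ≡ π`, `∑_{r < i} p ^ r ≡ σ`, and `η` the matching power of `coprimeFactorial p k (p ^ k)`. -/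
def blockShift (π : ZMod v) (σ : ZMod u) (η : (ZMod (p ^ k))ˣ) (D : ℕ) :
    ZMod v × ZMod u × Additive (ZMod (p ^ k))ˣ :=
  (D * π, D * σ + padicValNat p D !, Additive.ofMul (η ^ D * factorialUnit k hp (D * p ^ (k - 1))))

theorem exists_signature_add_blockShift [NeZero u] [NeZero v] (hk : k ≠ 0) :
    ∃ (π : ZMod v) (σ : ZMod u) (η : (ZMod (p ^ k))ˣ), ∀ n D : ℕ,
      signature k hp u v n + blockShift k hp u v π σ η D ∈ Set.range (signature k hp u v) := by
  have : NeZero (p ^ k) := ⟨pow_ne_zero k hp.ne_zero⟩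
  obtain ⟨c, hc⟩ := Finite.exists_infinite_fiber fun j : ℕ =>
    (((p ^ (j + (k - 1)) : ℕ) : ZMod v), ((∑ r ∈ range (j + (k - 1)), p ^ r : ℕ) : ZMod u),
      coprimeFactorial p k (p ^ k) ^ ∑ r ∈ range j, p ^ r)
  have hfib := Set.infinite_coe_iff.1 hc
  obtain ⟨j₀, hj₀, -⟩ := hfib.exists_gt 0
  have hη : IsUnit c.2.2 := hj₀ ▸ (isUnit_coprimeFactorial k hp _).pow _
  refine ⟨c.1, c.2.1, hη.unit, fun n D => ?_⟩
  obtain ⟨j, hj, hnj⟩ := hfib.exists_gt n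
  have hn : n < p ^ j := hnj.trans (Nat.lt_pow_self hp.one_lt)
  refine ⟨n + D * p ^ (j + (k - 1)), ?_⟩
  simp only [Set.mem_preimage, Set.mem_singleton_iff] at hj
  subst hj
  simp only [signature, blockShift, Prod.mk_add_mk, Prod.mk.injEq]
  refine ⟨by push_cast; ring, ?_, ?_⟩
  · rw [padicValNat_factorial_add_mul_pow hp
      (hn.trans_le (Nat.pow_le_pow_right hp.pos (Nat.le_add_right _ _)))]
    push_cast
    ring
  · rw [← ofMul_mul]
    congr 1
    ext
    simp only [coe_factorialUnit, Units.val_mul, Units.val_pow_eq_pow_val, IsUnit.unit_spec,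
      unitPart_factorial_add_mul_pow k hp hk hn, pow_mul]
    ring

theorem blockShift_mul_pow_add (hk : k ≠ 0) (π : ZMod v) (σ : ZMod u) (η : (ZMod (p ^ k))ˣ)
    (b : (ZMod (p ^ k))ˣ) :
    blockShift k hp u v π σ η ((b : ZMod (p ^ k)).val * p ^ k) +
        blockShift k hp u v π σ η (p ^ k - p) =
      blockShift k hp u v π σ η ((b : ZMod (p ^ k)).val * p ^ k - p) +
        blockShift k hp u v π σ η (p ^ k) + (0, 0, Additive.ofMul b) := by
  have : NeZero (p ^ k) := ⟨pow_ne_zero k hp.ne_zero⟩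
  set m := (b : ZMod (p ^ k)).val
  have hm : ¬p ∣ m := hp.coprime_iff_not_dvd.1
    ((ZMod.val_coe_unit_coprime b).coprime_dvd_right (dvd_pow_self p hk)).symm
  have hpP : p ≤ p ^ k := Nat.le_self_pow hk p
  have hpM : p ≤ m * p ^ k :=
    hpP.trans (Nat.le_mul_of_pos_left _ (Nat.pos_of_ne_zero fun h => hm (h ▸ dvd_zero p)))
  have hν1 := padicValNat_factorial_mul_pow k hp hk hp.not_dvd_one
  have hU1 := unitPart_factorial_mul_pow k hp hk hp.not_dvd_one
  simp only [one_mul, Nat.cast_one] at hν1 hU1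
  simp only [blockShift, Prod.mk_add_mk, Prod.mk.injEq, add_zero]
  refine ⟨by push_cast [Nat.cast_sub hpM, Nat.cast_sub hpP]; ring, ?_, ?_⟩
  · rw [padicValNat_factorial_mul_pow k hp hk hm, hν1]
    push_cast [Nat.cast_sub hpM, Nat.cast_sub hpP]
    ring
  · simp only [← ofMul_mul]
    congr 1
    ext
    have hη : (η : ZMod (p ^ k)) ^ (m * p ^ k) * η ^ (p ^ k - p) =
        η ^ (m * p ^ k - p) * η ^ p ^ k := by
      rw [← pow_add, ← pow_add]
      congr 1
      omega
    have hb : (m : ZMod (p ^ k)) = b := ZMod.natCast_zmod_val _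
    simp only [Units.val_mul, Units.val_pow_eq_pow_val, coe_factorialUnit,
      unitPart_factorial_mul_pow k hp hk hm, hU1, hb]
    linear_combination (b * ((-1) ^ (p ^ k - 1) * unitPart p k (p ^ k - 1)!) *
      unitPart p k ((m * p ^ k - p) * p ^ (k - 1))! *
        unitPart p k ((p ^ k - p) * p ^ (k - 1))!) * hη

theorem blockShift_prime (π : ZMod v) (σ : ZMod u) (η : (ZMod (p ^ k))ˣ) :
    blockShift k hp u v π σ η p = p • blockShift k hp u v π σ η 1 +
      (0, 1, Additive.ofMul (factorialUnit k hp (p * p ^ (k - 1)) /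
        factorialUnit k hp (1 * p ^ (k - 1)) ^ p)) := by
  have := Fact.mk hp
  have hνp : padicValNat p p ! = 1 := by simpa using padicValNat_factorial_mul (p := p) 1
  simp only [blockShift, Prod.smul_mk, Prod.mk_add_mk, Prod.mk.injEq, nsmul_eq_mul, hνp,
    ← ofMul_pow, ← ofMul_mul]
  refine ⟨by simp, by simp, ?_⟩
  rw [mul_pow, pow_one, mul_assoc, mul_div_cancel]

theorem mk_zero_mem_closure_range_blockShift (hk : k ≠ 0) (π : ZMod v) (σ : ZMod u)
    (η : (ZMod (p ^ k))ˣ) (a : ZMod u) (b : (ZMod (p ^ k))ˣ) :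
    ((0, a, Additive.ofMul b) : ZMod v × ZMod u × Additive (ZMod (p ^ k))ˣ) ∈
      AddSubgroup.closure (Set.range (blockShift k hp u v π σ η)) := by
  set H := AddSubgroup.closure (Set.range (blockShift k hp u v π σ η))
  have hshift (D : ℕ) : blockShift k hp u v π σ η D ∈ H := AddSubgroup.subset_closure ⟨D, rfl⟩
  have hunit (b : (ZMod (p ^ k))ˣ) : ((0, 0, Additive.ofMul b) : ZMod v × ZMod u × _) ∈ H := by
    rw [← sub_eq_of_eq_add' (blockShift_mul_pow_add k hp u v hk π σ η b)]
    exact H.sub_mem (H.add_mem (hshift _) (hshift _)) (H.add_mem (hshift _) (hshift _))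
  have hone : ((0, 1, 0) : ZMod v × ZMod u × Additive (ZMod (p ^ k))ˣ) ∈ H := by
    have h := H.sub_mem (hshift p) (H.nsmul_mem (hshift 1) p)
    rw [← eq_sub_of_add_eq' (blockShift_prime k hp u v π σ η).symm] at h
    simpa using H.sub_mem h (hunit (factorialUnit k hp (p * p ^ (k - 1)) /
      factorialUnit k hp (1 * p ^ (k - 1)) ^ p))
  convert H.add_mem (H.zsmul_mem hone (ZMod.cast a : ℤ)) (hunit b) using 1
  simp

end Signature

end FactorialResidue

open FactorialResidue in
theorem stmt_12_general (p k u v : ℕ) (hp : p.Prime) (hk : 1 ≤ k) (hu : 1 ≤ u)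
    (hv : 0 < v) :
    ∀ x : (ZMod (p ^ k))ˣ, ∀ y : ZMod u, ∀ z : ZMod v,
      ∃ n : ℕ, (lastDigits p k (Nat.factorial n) : ZMod (p ^ k)) = (x : ZMod (p ^ k)) ∧
        (padicValNat p (Nat.factorial n) : ZMod u) = y ∧ (n : ZMod v) = z := by
  intro x y z
  have : NeZero u := ⟨by omega⟩
  have : NeZero v := ⟨hv.ne'⟩
  obtain ⟨π, σ, η, hshift⟩ := exists_signature_add_blockShift k hp u v (by omega)
  obtain ⟨n, hn⟩ := add_mem_of_mem_closure_of_forall_add_mem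
    (by rintro _ ⟨n, rfl⟩ _ ⟨D, rfl⟩; exact hshift n D) (Set.mem_range_self z.val)
    (mk_zero_mem_closure_range_blockShift k hp u v (by omega) π σ η
      (y - padicValNat p z.val !) (x / factorialUnit k hp z.val))
  simp only [signature, Prod.mk_add_mk, Prod.mk.injEq, ← ofMul_mul, mul_div_cancel,
    EmbeddingLike.apply_eq_iff_eq, ZMod.natCast_zmod_val, add_zero, add_sub_cancel] at hn
  obtain ⟨hnz, hny, hnx⟩ := hn
  exact ⟨n, by rw [lastDigits_eq_unitPart hp, ← coe_factorialUnit k hp, hnx], hny, hnz⟩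

theorem stmt_12 (p k u v : ℕ) (hp : p.Prime) (hk : 1 ≤ k) (hu : 1 ≤ u)
    (hv : 0 < v) (hdvd : Nat.lcm (Nat.lcm (p ^ (k - 1)) u) 2 ∣ v)
    (hdvd4 : p = 2 → k = 2 → 4 ∣ v) :
    ∀ x : (ZMod (p ^ k))ˣ, ∀ y : ZMod u, ∀ z : ZMod v,
      ∃ n : ℕ, (lastDigits p k (Nat.factorial n) : ZMod (p ^ k)) = (x : ZMod (p ^ k)) ∧
        (padicValNat p (Nat.factorial n) : ZMod u) = y ∧ (n : ZMod v) = z :=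
  stmt_12_general p k u v hp hk hu hv
end

section
/- Define β : ℕ → ℤ/720ℤ by β(0) = 576 and β(5n + j) = β(n) · j! for all n ≥ 0 and j ∈ {0,1,2,3,4} (multiplication and factorial taken modulo 720). Then β takes only the values {144, 288, 432, 576}, and the set {n : β(n) = a} has asymptotic density 1/4 for each a ∈ {144, 288, 432, 576}. -/
/-!
Since `720 = 5 · 144`, the residue `144 · x mod 720` only depends on `x mod 5`, and `2` generates
`(ℤ/5ℤ)ˣ`. Hence `β n = 144 · 2 ^ f n` where `f n ∈ ℤ/4ℤ` is `2` plus the sum, over the base-5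
digits `d` of `n`, of `w d = log₂ (d! mod 5)`, i.e. `w = (0, 0, 1, 0, 2)`.

For the densities put `D_N(a) = 4 · #{n < N | f n = a} - N`. Splitting `n < 5N` by its last digit
gives `D_{5N}(a) = 3 D_N(a) + D_N(a - 1) + D_N(a - 2) = 2 D_N(a) - D_N(a + 1)`, the last step
because `∑ₐ D_N(a) = 0`. So the sup norm of `D` grows at most by a factor `3` per base-5 digit,
and `D_N = O(N ^ log₅ 3) = o(N)`.
-/

def hasDensity (A : ℕ → Prop) (d : ℝ) : Prop :=
  Filter.Tendsto (fun N => (Nat.card {n : ℕ // n < N ∧ A n} : ℝ) / N)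
    Filter.atTop (nhds d)

open Finset Filter Topology
open scoped Nat

lemma Nat.tendsto_log_atTop {b : ℕ} (hb : 1 < b) : Tendsto (Nat.log b) atTop atTop :=
  tendsto_atTop_atTop.2 fun k => ⟨b ^ k, fun _ => Nat.le_log_of_pow_le hb⟩

lemma tendsto_div_of_abs_le_mul_pow {u : ℕ → ℝ} {b : ℕ} {c C : ℝ} (hb : 1 < b) (hc : 0 ≤ c)
    (hcb : c < b) (hu : ∀ m N, N < b ^ m → |u N| ≤ C * c ^ m) :
    Tendsto (fun N => u N / N) atTop (𝓝 0) := by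
  have hb0 : (0 : ℝ) < b := by positivity
  have hC : 0 ≤ C := (abs_nonneg _).trans (by simpa using hu 0 0 (by simp))
  have hmaj : Tendsto (fun N => C * c * (c / b) ^ Nat.log b N) atTop (𝓝 0) := by
    simpa using ((tendsto_pow_atTop_nhds_zero_of_lt_one (by positivity)
      ((div_lt_one hb0).2 hcb)).comp (Nat.tendsto_log_atTop hb)).const_mul (C * c)
  refine squeeze_zero_norm' ?_ hmaj
  filter_upwards [eventually_ne_atTop 0] with N hN
  have hpow : ((b : ℝ) ^ Nat.log b N) ≤ N := by exact_mod_cast Nat.pow_log_le_self b hN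
  rw [Real.norm_eq_abs, abs_div, Nat.abs_cast, div_le_iff₀ (by positivity)]
  calc |u N| ≤ C * c ^ (Nat.log b N + 1) := hu _ N (Nat.lt_pow_succ_log_self hb N)
    _ = C * c * (c / b) ^ Nat.log b N * b ^ Nat.log b N := by
      rw [div_pow, pow_succ]; field_simp
    _ ≤ C * c * (c / b) ^ Nat.log b N * N := by gcongr

def digitWeight (j : ℕ) : ZMod 4 := if j = 2 then 1 else if j = 4 then 2 else 0

def discrepancy (f : ℕ → ZMod 4) (a : ZMod 4) (N : ℕ) : ℤ :=
  ∑ n ∈ range N, if f n = a then 3 else -1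

lemma four_mul_card_eq (f : ℕ → ZMod 4) (a : ZMod 4) (N : ℕ) :
    4 * (Nat.card {n : ℕ // n < N ∧ f n = a} : ℤ) = N + discrepancy f a N := by
  have hcard : Nat.card {n : ℕ // n < N ∧ f n = a} = #{n ∈ range N | f n = a} := by
    rw [← Nat.card_eq_finsetCard]
    exact Nat.card_congr (Equiv.subtypeEquivRight fun n => by simp)
  rw [hcard, card_filter, discrepancy]
  push_cast
  rw [mul_sum, show (N : ℤ) = ∑ _n ∈ range N, 1 by simp, ← sum_add_distrib]
  exact sum_congr rfl fun n _ => by split_ifs <;> norm_num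

lemma sum_digitWeight_ite (x a : ZMod 4) :
    ∑ j ∈ range 5, (if x + digitWeight j = a then (3 : ℤ) else -1) =
      2 * (if x = a then 3 else -1) - (if x = a + 1 then 3 else -1) := by
  revert x a; decide

lemma discrepancy_five_mul {f : ℕ → ZMod 4}
    (hf : ∀ n j, j < 5 → f (5 * n + j) = f n + digitWeight j) (a : ZMod 4) (Q : ℕ) :
    discrepancy f a (5 * Q) = 2 * discrepancy f a Q - discrepancy f (a + 1) Q := by
  induction Q with
  | zero => simp [discrepancy]
  | succ Q ih =>
    have hblock : ∑ j ∈ range 5, (if f (5 * Q + j) = a then (3 : ℤ) else -1) =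
        2 * (if f Q = a then 3 else -1) - (if f Q = a + 1 then 3 else -1) := by
      rw [← sum_digitWeight_ite]
      exact sum_congr rfl fun j hj => by rw [hf Q j (mem_range.1 hj)]
    rw [mul_add_one, discrepancy, sum_range_add, ← discrepancy, ih, hblock]
    simp only [discrepancy, sum_range_succ]
    ring

lemma abs_discrepancy_le {f : ℕ → ZMod 4}
    (hf : ∀ n j, j < 5 → f (5 * n + j) = f n + digitWeight j) (m : ℕ) :
    ∀ N < 5 ^ m, ∀ a, |discrepancy f a N| ≤ 6 * 3 ^ m - 6 := by
  induction m with
  | zero =>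
    intro N hN a
    simp [Nat.lt_one_iff.1 (by simpa using hN), discrepancy]
  | succ m ih =>
    intro N hN a
    have hQ : N / 5 < 5 ^ m := by omega
    have htail :
        |∑ j ∈ range (N % 5), (if f (5 * (N / 5) + j) = a then (3 : ℤ) else -1)| ≤ 12 :=
      calc _ ≤ ∑ j ∈ range (N % 5), |(if f (5 * (N / 5) + j) = a then (3 : ℤ) else -1)| :=
            abs_sum_le_sum_abs _ _
        _ ≤ ∑ j ∈ range (N % 5), (3 : ℤ) := sum_le_sum fun j _ => by split_ifs <;> norm_num
        _ ≤ 12 := by simp; omega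
    rw [← Nat.div_add_mod N 5, discrepancy, sum_range_add, ← discrepancy,
      discrepancy_five_mul hf]
    obtain ⟨h1, h1'⟩ := abs_le.1 (ih _ hQ a)
    obtain ⟨h2, h2'⟩ := abs_le.1 (ih _ hQ (a + 1))
    obtain ⟨h3, h3'⟩ := abs_le.1 htail
    rw [abs_le, pow_succ]
    constructor <;> linarith

lemma hasDensity_of_digitWeight {f : ℕ → ZMod 4}
    (hf : ∀ n j, j < 5 → f (5 * n + j) = f n + digitWeight j) (a : ZMod 4) :
    hasDensity (fun n => f n = a) (1 / 4) := by
  have hD : Tendsto (fun N => (discrepancy f a N : ℝ) / N) atTop (𝓝 0) :=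
    tendsto_div_of_abs_le_mul_pow (b := 5) (c := 3) (C := 6) (by norm_num) (by norm_num)
      (by norm_num) fun m N hN => by
        have h : ((|discrepancy f a N| : ℤ) : ℝ) ≤ 6 * 3 ^ m - 6 := by
          exact_mod_cast abs_discrepancy_le hf m N hN a
        rw [← Int.cast_abs]
        linarith
  have hlim := (hD.div_const 4).const_add (1 / 4)
  rw [zero_div, add_zero] at hlim
  refine hlim.congr' ?_
  filter_upwards [eventually_ne_atTop 0] with N hN
  have h : (4 * Nat.card {n : ℕ // n < N ∧ f n = a} : ℝ) = N + discrepancy f a N := by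
    exact_mod_cast four_mul_card_eq f a N
  field_simp
  linarith

def ofLog (k : ZMod 4) : ZMod 720 := 144 * 2 ^ k.val

lemma ofLog_add_digitWeight (k : ZMod 4) {j : ℕ} (hj : j < 5) :
    ofLog (k + digitWeight j) = ofLog k * (j ! : ZMod 720) := by
  interval_cases j <;> revert k <;> decide

lemma ofLog_injective : Function.Injective ofLog := by decide

lemma range_ofLog : Set.range ofLog = {144, 288, 432, 576} := by
  ext a
  simp only [Set.mem_range, Set.mem_insert_iff, Set.mem_singleton_iff]
  constructor
  · rintro ⟨k, rfl⟩
    fin_cases k <;> decide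
  · rintro (rfl | rfl | rfl | rfl)
    exacts [⟨0, rfl⟩, ⟨1, rfl⟩, ⟨3, rfl⟩, ⟨2, rfl⟩]

def digitLog (n : ℕ) : ZMod 4 := 2 + ((Nat.digits 5 n).map digitWeight).sum

lemma digitLog_five_mul_add (n : ℕ) {j : ℕ} (hj : j < 5) :
    digitLog (5 * n + j) = digitLog n + digitWeight j := by
  rcases Nat.eq_zero_or_pos n with rfl | hn
  · interval_cases j <;> rfl
  · rw [digitLog, add_comm (5 * n), Nat.digits_add 5 (by norm_num) j n hj (Or.inr hn.ne'),
      List.map_cons, List.sum_cons, digitLog]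
    ring

lemma eq_ofLog_digitLog {β : ℕ → ZMod 720} (h0 : β 0 = 576)
    (hrec : ∀ n j, j ≤ 4 → β (5 * n + j) = β n * (j ! : ZMod 720)) (n : ℕ) :
    β n = ofLog (digitLog n) := by
  induction n using Nat.strong_induction_on with
  | _ n ih =>
    rcases Nat.eq_zero_or_pos n with rfl | hn
    · exact h0
    · have hj : n % 5 < 5 := Nat.mod_lt n (by norm_num)
      rw [← Nat.div_add_mod n 5, hrec _ _ (by omega), digitLog_five_mul_add _ hj,
        ofLog_add_digitWeight _ hj, ih _ (Nat.div_lt_self hn (by norm_num))]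

theorem stmt_17 (β : ℕ → ZMod 720) (h0 : β 0 = 576)
    (hrec : ∀ n : ℕ, ∀ j : ℕ, j ≤ 4 → β (5 * n + j) = β n * (Nat.factorial j : ZMod 720)) :
    (∀ n, β n ∈ ({144, 288, 432, 576} : Set (ZMod 720))) ∧
      ∀ a ∈ ({144, 288, 432, 576} : Set (ZMod 720)),
        hasDensity (fun n => β n = a) (1 / 4) := by
  have hβ := eq_ofLog_digitLog h0 hrec
  refine ⟨fun n => range_ofLog ▸ hβ n ▸ Set.mem_range_self _, fun a ha => ?_⟩
  obtain ⟨k, rfl⟩ : a ∈ Set.range ofLog := range_ofLog ▸ ha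
  have hiff : (fun n => β n = ofLog k) = fun n => digitLog n = k :=
    funext fun n => by rw [hβ, ofLog_injective.eq_iff]
  rw [hiff]
  exact hasDensity_of_digitWeight (fun n _ hj => digitLog_five_mul_add n hj) k
end

section
/- Let p be a prime, k ≥ 1, and m a positive integer. Then ℓ_{p^{l},k}(m) ≡ ℓ_{p, l·k}(m) · p^{ν_p(m) mod l} (mod p^{l·k}) for any l ≥ 1. -/
theorem padicValNat_pow_base (c l m : ℕ) : padicValNat (c ^ l) m = padicValNat c m / l := by
  rcases eq_or_ne c 1 with rfl | hc
  · simp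
  rcases Nat.eq_zero_or_pos l with rfl | hl
  · simp
  rcases eq_or_ne m 0 with rfl | hm
  · simp
  have hcl : c ^ l ≠ 1 := by simp [hc, hl.ne']
  refine eq_of_forall_le_iff fun j => ?_
  rw [← Nat.pow_dvd_iff_le_padicValNat hcl hm, ← pow_mul, Nat.pow_dvd_iff_le_padicValNat hc hm,
    Nat.le_div_iff_mul_le hl, mul_comm]

theorem Nat.div_eq_div_mul_mul_of_mul_dvd {m d e : ℕ} (h : d * e ∣ m) :
    m / d = m / (d * e) * e := by
  rw [← Nat.div_div_eq_div_mul, Nat.div_mul_cancel (Nat.dvd_div_of_mul_dvd h)]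

theorem div_pow_padicValNat_pow_base (c l m : ℕ) :
    m / (c ^ l) ^ padicValNat (c ^ l) m =
      m / c ^ padicValNat c m * c ^ (padicValNat c m % l) := by
  have hsplit : c ^ padicValNat c m =
      c ^ (l * (padicValNat c m / l)) * c ^ (padicValNat c m % l) := by
    rw [← pow_add, Nat.div_add_mod]
  rw [padicValNat_pow_base, ← pow_mul, hsplit]
  exact Nat.div_eq_div_mul_mul_of_mul_dvd (hsplit ▸ pow_padicValNat_dvd)

theorem stmt_18_general (p k l m : ℕ) :
    lastDigits (p ^ l) k m ≡
      lastDigits p (l * k) m * p ^ (padicValNat p m % l) [MOD p ^ (l * k)] := by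
  unfold lastDigits
  rw [div_pow_padicValNat_pow_base, ← pow_mul]
  exact (Nat.mod_modEq _ _).trans ((Nat.mod_modEq _ _).symm.mul_right _)

theorem stmt_18 (p k l m : ℕ) (hp : p.Prime) (hk : 1 ≤ k) (hl : 1 ≤ l)
    (hm : 0 < m) :
    lastDigits (p ^ l) k m ≡
      lastDigits p (l * k) m * p ^ (padicValNat p m % l) [MOD p ^ (l * k)] :=
  stmt_18_general p k l m
end
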